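/- Let F : ℝⁿ → ℝᵐ satisfy the local tangential cone condition with constant η ∈ [0, 1/2), and suppose x⋆ ∈ ℝⁿ satisfies F(x⋆) = 0. Let I ⊆ {1,…,m} be a nonempty index subset, let x_k ∈ ℝⁿ with (F'_I(x_k))ᵀ F_I(x_k) ≠ 0, let δ ∈ (0, 2(1−η)), and define x_{k+1} = x_k − δ (‖F_I(x_k)‖₂² / ‖(F'_I(x_k))ᵀ F_I(x_k)‖₂²) (F'_I(x_k))ᵀ F_I(x_k). Then ‖x_{k+1} − x⋆‖₂² ≤ ‖x_k − x⋆‖₂² − (2(1−η)δ − δ²) ‖F_I(x_k)‖₂² / σ_max²(F'_I(x_k)), where σ_max(A) denotes the largest singular value of A. -/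

import Mathlib

open Matrix

/-- The singular values of a real matrix `A`: square roots of the eigenvalues of `AᵀA`. -/
noncomputable def singVals {m' : Type*} [Fintype m'] {n : ℕ}
    (A : Matrix m' (Fin n) ℝ) : Fin n → ℝ :=
  fun j => Real.sqrt (((by have h := Matrix.isHermitian_conjTranspose_mul_self A; rwa [Matrix.conjTranspose_eq_transpose_of_trivial] at h : (Aᵀ * A).IsHermitian)).eigenvalues j)

/-- The largest singular value of `A`. -/
noncomputable def sigmaMax {m' : Type*} [Fintype m'] {n : ℕ}
    (A : Matrix m' (Fin n) ℝ) : ℝ :=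
  ⨆ j, singVals A j

open scoped InnerProductSpace
open WithLp

/-!
Put `e = x_k - x⋆` and `g = F'_I(x_k)ᵀ F_I(x_k)`. Since `F(x⋆) = 0`, the tangential cone condition
at the pair `(x_k, x⋆)` gives `(1 - η) F_i(x_k)² ≤ F_i(x_k) ⟪∇F_i(x_k), e⟫` for each `i`;
summing, `(1 - η) ‖F_I(x_k)‖² ≤ ⟪g, e⟫`. Expanding `‖e - c g‖²` for the extrapolated step
`c = δ ‖F_I(x_k)‖² / ‖g‖²` then gives a decrease of `(2(1 - η)δ - δ²) ‖F_I(x_k)‖⁴ / ‖g‖²`.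
Finally `‖g‖ ≤ σ_max ‖F_I(x_k)‖`: the quadratic form of `AᵀA` is bounded by its largest eigenvalue
`σ_max(A)²`, so `‖A w‖ ≤ σ_max ‖w‖`, and by duality `‖Aᵀ f‖² = ⟪f, A Aᵀ f⟫ ≤ ‖f‖ σ_max ‖Aᵀ f‖`.
-/

lemma Matrix.IsHermitian.inner_mulVec_le {ι : Type*} [Fintype ι] [DecidableEq ι]
    {M : Matrix ι ι ℝ} (hM : M.IsHermitian) {c : ℝ} (hc : ∀ j, hM.eigenvalues j ≤ c)
    (w : EuclideanSpace ℝ ι) :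
    ⟪w, toLp 2 (M *ᵥ ofLp w)⟫_ℝ ≤ c * ‖w‖ ^ 2 := by
  set b := hM.eigenvectorBasis
  have hb : ∀ j, ⟪b j, toLp 2 (M *ᵥ ofLp w)⟫_ℝ = hM.eigenvalues j * ⟪b j, w⟫_ℝ := fun j => by
    have hMb : toLp 2 (M *ᵥ ofLp (b j)) = hM.eigenvalues j • b j := by
      rw [hM.mulVec_eigenvectorBasis]; rfl
    rw [← real_inner_smul_left, ← hMb]
    exact ((Matrix.isSymmetric_toEuclideanLin_iff.mpr hM) (b j) w).symm
  calc ⟪w, toLp 2 (M *ᵥ ofLp w)⟫_ℝ = ∑ j, hM.eigenvalues j * ⟪b j, w⟫_ℝ ^ 2 := by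
        rw [← b.sum_inner_mul_inner]
        refine Finset.sum_congr rfl fun j _ => ?_
        rw [hb, real_inner_comm w]
        ring
    _ ≤ ∑ j, c * ⟪b j, w⟫_ℝ ^ 2 := by gcongr with j; exact hc j
    _ = c * ‖w‖ ^ 2 := by rw [← Finset.mul_sum, b.sum_sq_inner_right]

section SingularValues

variable {m' : Type*} [Fintype m'] {n : ℕ} (A : Matrix m' (Fin n) ℝ)

lemma sigmaMax_nonneg : 0 ≤ sigmaMax A :=
  Real.iSup_nonneg fun _ => Real.sqrt_nonneg _

lemma eigenvalues_transpose_mul_self_le_sigmaMax_sq (hA : (Aᵀ * A).IsHermitian) (j : Fin n) :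
    hA.eigenvalues j ≤ sigmaMax A ^ 2 :=
  calc hA.eigenvalues j = singVals A j ^ 2 :=
        (Real.sq_sqrt (Matrix.eigenvalues_conjTranspose_mul_self_nonneg A j)).symm
    _ ≤ sigmaMax A ^ 2 :=
        pow_le_pow_left₀ (Real.sqrt_nonneg _)
          (le_ciSup (f := singVals A) (Set.finite_range _).bddAbove j) 2

lemma norm_mulVec_le_sigmaMax_mul_norm (w : EuclideanSpace ℝ (Fin n)) :
    ‖toLp 2 (A *ᵥ ofLp w)‖ ≤ sigmaMax A * ‖w‖ := by
  have hA : (Aᵀ * A).IsHermitian := by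
    simpa only [Matrix.conjTranspose_eq_transpose_of_trivial] using
      Matrix.isHermitian_conjTranspose_mul_self A
  have hsq : ‖toLp 2 (A *ᵥ ofLp w)‖ ^ 2 = ⟪w, toLp 2 ((Aᵀ * A) *ᵥ ofLp w)⟫_ℝ := by
    rw [← real_inner_self_eq_norm_sq, EuclideanSpace.inner_eq_star_dotProduct,
      EuclideanSpace.inner_eq_star_dotProduct]
    simp only [star_trivial, ← Matrix.mulVec_mulVec, Matrix.mulVec_transpose,
      ← Matrix.dotProduct_mulVec]
  refine (pow_le_pow_iff_left₀ (norm_nonneg _) (mul_nonneg (sigmaMax_nonneg A) (norm_nonneg w))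
    two_ne_zero).mp ?_
  rw [hsq, mul_pow]
  exact hA.inner_mulVec_le (eigenvalues_transpose_mul_self_le_sigmaMax_sq A hA) w

lemma norm_transpose_mulVec_le_sigmaMax_mul_norm (f : EuclideanSpace ℝ m') :
    ‖toLp 2 (Aᵀ *ᵥ ofLp f)‖ ≤ sigmaMax A * ‖f‖ := by
  set g := toLp 2 (Aᵀ *ᵥ ofLp f)
  have hg : ‖g‖ * ‖g‖ ≤ sigmaMax A * ‖f‖ * ‖g‖ :=
    calc ‖g‖ * ‖g‖ = ⟪f, toLp 2 (A *ᵥ ofLp g)⟫_ℝ := by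
          rw [← real_inner_self_eq_norm_mul_norm, EuclideanSpace.inner_eq_star_dotProduct,
            EuclideanSpace.inner_eq_star_dotProduct]
          simp only [g, star_trivial, Matrix.mulVec_transpose]
          rw [dotProduct_comm (A *ᵥ _), dotProduct_mulVec]
      _ ≤ ‖f‖ * ‖toLp 2 (A *ᵥ ofLp g)‖ := real_inner_le_norm _ _
      _ ≤ ‖f‖ * (sigmaMax A * ‖g‖) := by
          gcongr; exact norm_mulVec_le_sigmaMax_mul_norm A g
      _ = sigmaMax A * ‖f‖ * ‖g‖ := by ring
  rcases (norm_nonneg g).eq_or_lt with hg0 | hgpos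
  · rw [← hg0]; exact mul_nonneg (sigmaMax_nonneg A) (norm_nonneg f)
  · exact le_of_mul_le_mul_right hg hgpos

end SingularValues

lemma one_sub_mul_sq_le_mul_of_abs_sub_le {a t η : ℝ} (h : |a - t| ≤ η * |a|) :
    (1 - η) * a ^ 2 ≤ a * t := by
  obtain ⟨h₁, h₂⟩ := abs_le.mp h
  rcases le_or_gt 0 a with ha | ha
  · rw [abs_of_nonneg ha] at h₁ h₂; nlinarith
  · rw [abs_of_neg ha] at h₁ h₂; nlinarith

lemma norm_sub_smul_sq_le_of_le_inner {E : Type*} [NormedAddCommGroup E] [InnerProductSpace ℝ E]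
    {e g : E} {η δ r : ℝ} (hg : g ≠ 0) (hδ : 0 ≤ δ) (hr : 0 ≤ r) (he : (1 - η) * r ≤ ⟪g, e⟫_ℝ) :
    ‖e - (δ * r / ‖g‖ ^ 2) • g‖ ^ 2 ≤ ‖e‖ ^ 2 - (2 * (1 - η) * δ - δ ^ 2) * r ^ 2 / ‖g‖ ^ 2 := by
  have hg2 : ‖g‖ ^ 2 ≠ 0 := by positivity
  set c := δ * r / ‖g‖ ^ 2
  have hc : 0 ≤ c := by positivity
  calc ‖e - c • g‖ ^ 2 = ‖e‖ ^ 2 - 2 * c * ⟪g, e⟫_ℝ + c ^ 2 * ‖g‖ ^ 2 := by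
        rw [norm_sub_sq_real, real_inner_smul_right, real_inner_comm, norm_smul, mul_pow,
          Real.norm_eq_abs, sq_abs]
        ring
    _ ≤ ‖e‖ ^ 2 - 2 * c * ((1 - η) * r) + c ^ 2 * ‖g‖ ^ 2 := by gcongr
    _ = ‖e‖ ^ 2 - (2 * (1 - η) * δ - δ ^ 2) * r ^ 2 / ‖g‖ ^ 2 := by
        simp only [c]; field_simp; ring

lemma mul_div_le_mul_sq_div_of_le_mul {β r s q : ℝ} (hβ : 0 ≤ β) (hq : 0 < q) (h : q ≤ s * r) :
    β * r / s ≤ β * r ^ 2 / q := by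
  obtain ⟨hs, hr⟩ := mul_ne_zero_iff.mp (hq.trans_le h).ne'
  calc β * r / s = β * r ^ 2 / (s * r) := by field_simp
    _ ≤ β * r ^ 2 / q := by gcongr

theorem abnk_adaptive_stepsize_step_general
    {n m : ℕ}
    (F : Fin m → EuclideanSpace ℝ (Fin n) → ℝ)
    (grad : Fin m → EuclideanSpace ℝ (Fin n) → EuclideanSpace ℝ (Fin n))
    (η : ℝ)
    -- local tangential cone condition with constant η
    (hltcc : ∀ i (x₁ x₂ : EuclideanSpace ℝ (Fin n)),
      |F i x₁ - F i x₂ - ∑ j, grad i x₁ j * (x₁ j - x₂ j)| ≤ η * |F i x₁ - F i x₂|)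
    (xstar : EuclideanSpace ℝ (Fin n)) (hstar : ∀ i, F i xstar = 0)
    (S : Finset (Fin m))
    (xk : EuclideanSpace ℝ (Fin n))
    -- the row-submatrix F'_I(x_k) of the Jacobian
    (J : Matrix {i // i ∈ S} (Fin n) ℝ)
    (hJdef : J = Matrix.of fun (i : {i // i ∈ S}) (j : Fin n) => grad i.1 xk j)
    -- g = (F'_I(x_k))ᵀ F_I(x_k)
    (g : EuclideanSpace ℝ (Fin n))
    (hgdef : g = ∑ i ∈ S, F i xk • grad i xk)
    (hg : g ≠ 0)
    (δ : ℝ) (hδ0 : 0 < δ) (hδ2 : δ < 2 * (1 - η))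
    (xk1 : EuclideanSpace ℝ (Fin n))
    -- x_{k+1} = x_k − δ (‖F_I(x_k)‖₂² / ‖g‖₂²) g
    (hupd : xk1 = xk - (δ * (∑ i ∈ S, (F i xk) ^ 2) / ‖g‖ ^ 2) • g) :
    ‖xk1 - xstar‖ ^ 2
      ≤ ‖xk - xstar‖ ^ 2
        - (2 * (1 - η) * δ - δ ^ 2) * (∑ i ∈ S, (F i xk) ^ 2) / sigmaMax J ^ 2 := by
  set r := ∑ i ∈ S, F i xk ^ 2
  set f : EuclideanSpace ℝ S := toLp 2 fun i => F i xk
  have hf : ‖f‖ ^ 2 = r := by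
    simp [EuclideanSpace.norm_sq_eq, f, r, Finset.sum_attach S (fun i => F i xk ^ 2)]
  have hgJ : g = toLp 2 (Jᵀ *ᵥ ofLp f) := by
    ext j
    simp [hgdef, hJdef, f, Matrix.mulVec, dotProduct, mul_comm,
      Finset.sum_attach S (fun i => F i xk * grad i xk j)]
  have hcone : (1 - η) * r ≤ ⟪g, xk - xstar⟫_ℝ := by
    rw [hgdef, sum_inner, Finset.mul_sum]
    refine Finset.sum_le_sum fun i _ => ?_
    rw [real_inner_smul_left]
    apply one_sub_mul_sq_le_mul_of_abs_sub_le
    simpa [hstar i, PiLp.inner_apply, mul_comm] using hltcc i xk xstar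
  have hgσ : ‖g‖ ^ 2 ≤ sigmaMax J ^ 2 * r := by
    rw [← hf, ← mul_pow, hgJ]
    gcongr
    exact norm_transpose_mulVec_le_sigmaMax_mul_norm J f
  calc ‖xk1 - xstar‖ ^ 2 = ‖(xk - xstar) - (δ * r / ‖g‖ ^ 2) • g‖ ^ 2 := by
        rw [hupd, sub_right_comm]
    _ ≤ ‖xk - xstar‖ ^ 2 - (2 * (1 - η) * δ - δ ^ 2) * r ^ 2 / ‖g‖ ^ 2 :=
        norm_sub_smul_sq_le_of_le_inner hg hδ0.le (by positivity) hcone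
    _ ≤ _ := sub_le_sub_left
        (mul_div_le_mul_sq_div_of_le_mul (by nlinarith) (by positivity) hgσ) _

/-- Lemma 4: one step of the averaging block nonlinear Kaczmarz method
with adaptive (extrapolated) stepsize, i.e.
`x_{k+1} = x_k − δ (‖F_I(x_k)‖₂²/‖(F'_I(x_k))ᵀ F_I(x_k)‖₂²) (F'_I(x_k))ᵀ F_I(x_k)`,
satisfies `‖x_{k+1} − x⋆‖₂² ≤ ‖x_k − x⋆‖₂² − (2(1−η)δ − δ²) ‖F_I(x_k)‖₂²/σ_max²(F'_I(x_k))`. -/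
theorem abnk_adaptive_stepsize_step
    {n m : ℕ}
    (F : Fin m → EuclideanSpace ℝ (Fin n) → ℝ)
    (grad : Fin m → EuclideanSpace ℝ (Fin n) → EuclideanSpace ℝ (Fin n))
    (η : ℝ) (hη0 : 0 ≤ η) (hη : η < 1 / 2)
    -- F is differentiable with Jacobian whose i-th row is ∇F_i
    (hdiff : ∀ i x, HasGradientAt (F i) (grad i x) x)
    -- local tangential cone condition with constant η
    (hltcc : ∀ i (x₁ x₂ : EuclideanSpace ℝ (Fin n)),
      |F i x₁ - F i x₂ - ∑ j, grad i x₁ j * (x₁ j - x₂ j)| ≤ η * |F i x₁ - F i x₂|)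
    (xstar : EuclideanSpace ℝ (Fin n)) (hstar : ∀ i, F i xstar = 0)
    (S : Finset (Fin m)) (hS : S.Nonempty)
    (xk : EuclideanSpace ℝ (Fin n))
    -- the row-submatrix F'_I(x_k) of the Jacobian
    (J : Matrix {i // i ∈ S} (Fin n) ℝ)
    (hJdef : J = Matrix.of fun (i : {i // i ∈ S}) (j : Fin n) => grad i.1 xk j)
    -- g = (F'_I(x_k))ᵀ F_I(x_k)
    (g : EuclideanSpace ℝ (Fin n))
    (hgdef : g = ∑ i ∈ S, F i xk • grad i xk)
    (hg : g ≠ 0)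
    (δ : ℝ) (hδ0 : 0 < δ) (hδ2 : δ < 2 * (1 - η))
    (xk1 : EuclideanSpace ℝ (Fin n))
    -- x_{k+1} = x_k − δ (‖F_I(x_k)‖₂² / ‖g‖₂²) g
    (hupd : xk1 = xk - (δ * (∑ i ∈ S, (F i xk) ^ 2) / ‖g‖ ^ 2) • g) :
    ‖xk1 - xstar‖ ^ 2
      ≤ ‖xk - xstar‖ ^ 2
        - (2 * (1 - η) * δ - δ ^ 2) * (∑ i ∈ S, (F i xk) ^ 2) / sigmaMax J ^ 2 :=
  abnk_adaptive_stepsize_step_general F grad η hltcc xstar hstar S xk J hJdef g hgdef hg δ hδ0 hδ2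
    xk1 hupd
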